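/- Let BG = (V, E) be a bi-directed graph and let BG^t be its ListRankingTransform. For all u, v ∈ V and orientations a, b ∈ {▷, ◁}: there is a directed path in BG^t from u^a to v^b if and only if there is a directed path in BG^t from v^{¬b} to u^{¬a}. (Consequently, compacting candidate bi-directed chains via list ranking on BG^t produces both the forward and the reverse-complementary version of every chain.) -/

import Mathlib

/-- Orientations of the arrowheads of a bi-directed edge: `fwd` = ▷, `rev` = ◁. -/
inductive Orient : Type
  | fwd | rev
  deriving DecidableEq

/-- `¬` on orientations: swaps ▷ and ◁. -/
def Orient.neg : Orient → Orient
  | .fwd => .rev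
  | .rev => .fwd

/-- A valid bi-directed walk of length `m ≥ 1` from `u` to `v` in the bi-directed graph
with edge set `E`: a vertex sequence `vert 0 = u, …, vert m = v` together with
orientation pairs `(a l, b l)` for `1 ≤ l ≤ m` such that each step traverses a
bi-directed edge (in either direction) and the orientations of consecutive edges agree
at each intermediate vertex. -/
def IsBiWalk {V : Type*} (E : Set (V × V × Orient × Orient)) (m : ℕ)
    (vert : ℕ → V) (a b : ℕ → Orient) (u v : V) : Prop :=
  1 ≤ m ∧ vert 0 = u ∧ vert m = v ∧
  (∀ l, 1 ≤ l → l ≤ m →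
    (vert (l - 1), vert l, a l, b l) ∈ E ∨
    (vert l, vert (l - 1), (b l).neg, (a l).neg) ∈ E) ∧
  (∀ l, 1 ≤ l → l < m → b l = a (l + 1))

/-- There is a valid bi-directed walk from `u` to `v`. -/
def BiWalk {V : Type*} (E : Set (V × V × Orient × Orient)) (u v : V) : Prop :=
  ∃ m vert a b, IsBiWalk E m vert a b u v

/-- The arcs of the directed graph `BGᵗ` produced by the ListRankingTransform on vertex
set `V × Orient` (writing `v^o` for `(v, o)`): each bi-directed edge `(u, v, o₁, o₂) ∈ E`
yields the two directed arcs `u^{o₁} → v^{o₂}` and `v^{¬o₂} → u^{¬o₁}`. -/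
def TArc {V : Type*} (E : Set (V × V × Orient × Orient)) (p q : V × Orient) : Prop :=
  ∃ u v o₁ o₂, (u, v, o₁, o₂) ∈ E ∧
    ((p = (u, o₁) ∧ q = (v, o₂)) ∨ (p = (v, o₂.neg) ∧ q = (u, o₁.neg)))

/-! The map `x^o ↦ x^{¬o}` is an involution of `V × Orient` that reverses every arc of `BGᵗ`,
since the two arcs contributed by a bi-directed edge are exchanged by it. Hence it reverses
every directed path, and applying it twice gives the converse. -/

@[simp]
lemma Orient.neg_neg (o : Orient) : o.neg.neg = o := by cases o <;> rfl

lemma tArc_neg {V : Type*} {E : Set (V × V × Orient × Orient)} {p q : V × Orient}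
    (h : TArc E p q) : TArc E (q.1, q.2.neg) (p.1, p.2.neg) := by
  obtain ⟨x, y, o₁, o₂, hE, ⟨rfl, rfl⟩ | ⟨rfl, rfl⟩⟩ := h
  · exact ⟨x, y, o₁, o₂, hE, .inr ⟨rfl, rfl⟩⟩
  · exact ⟨x, y, o₁, o₂, hE, .inl (by simp)⟩

lemma transGen_tArc_neg {V : Type*} {E : Set (V × V × Orient × Orient)} {p q : V × Orient}
    (h : Relation.TransGen (TArc E) p q) :
    Relation.TransGen (TArc E) (q.1, q.2.neg) (p.1, p.2.neg) :=
  Relation.transGen_swap.mp <|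
    h.lift (fun x => (x.1, x.2.neg)) fun _ _ hxy => tArc_neg hxy

/-- There is a directed path in the ListRankingTransform from `u^a` to
`v^b` iff there is one from `v^{¬b}` to `u^{¬a}`. -/
theorem transGen_tArc_iff_neg {V : Type*} (E : Set (V × V × Orient × Orient))
    (u v : V) (a b : Orient) :
    Relation.TransGen (TArc E) (u, a) (v, b) ↔
      Relation.TransGen (TArc E) (v, b.neg) (u, a.neg) :=
  ⟨transGen_tArc_neg, fun h => by simpa using transGen_tArc_neg h⟩
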